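/- arXiv:1603.04162 — 5 statements merged into one kernel-verified Lean document; each statement's English description precedes it below -/
import Mathlib

section
/- Let X be a metric measure space with Borel measure m, x a point, β > 1, r ∈ (0,1), and set r_n := r^n. Suppose there is D > 0 and N₀ such that m(B_{r_n}(x)) ≥ (D/2) r_n^β for all n ≥ N₀. Then for all n ≥ N₀, ∫_{B_{r_n}(x)} (1 - d(x,·)/r_n) dm ≥ (D/2) · ((1-r)/r) · r_n^β · r^{β+1}/(1 - r^{β+1}). -/
open MeasureTheory Metric Topology Filter

theorem bishop_lemma_sup {X : Type*} [MetricSpace X] [MeasurableSpace X] [BorelSpace X]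
    (m : Measure X) (x : X) (β : ℝ) (hβ : 1 < β) (r : ℝ) (hr : r ∈ Set.Ioo (0:ℝ) 1)
    (D : ℝ) (hD : 0 < D) (N₀ : ℕ)
    (hvol : ∀ n ≥ N₀, D / 2 * (r ^ n) ^ β ≤ (m (ball x (r ^ n))).toReal) :
    ∀ n ≥ N₀,
      D / 2 * ((1 - r) / r) * (r ^ n) ^ β * (r ^ (β + 1) / (1 - r ^ (β + 1)))
        ≤ ∫ y in ball x (r ^ n), (1 - dist x y / r ^ n) ∂m := by
  obtain ⟨hr0, hr1⟩ := hr
  have hrn : ∀ n : ℕ, (0:ℝ) < r ^ n := fun n => pow_pos hr0 n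
  -- finiteness of measures of balls
  have hfin : ∀ n ≥ N₀, m (ball x (r ^ n)) < ⊤ := by
    intro n hn
    by_contra h
    push_neg at h
    have h' := hvol n hn
    rw [top_le_iff.mp h] at h'
    simp only [ENNReal.toReal_top] at h'
    nlinarith [Real.rpow_pos_of_pos (hrn n) β]
  set I : ℕ → ℝ := fun n => ∫ y in ball x (r ^ n), (1 - dist x y / r ^ n) ∂m with hIdef
  have hcont : ∀ n : ℕ, Continuous fun y : X => 1 - dist x y / r ^ n := by
    intro n
    exact continuous_const.sub ((continuous_const.dist continuous_id).div_const _)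
  have hint : ∀ n ≥ N₀, IntegrableOn (fun y => 1 - dist x y / r ^ n) (ball x (r ^ n)) m := by
    intro n hn
    refine Integrable.mono' (g := fun _ : X => (1:ℝ))
      (integrableOn_const (hfin n hn).ne)
      ((hcont n).aestronglyMeasurable.restrict) ?_
    filter_upwards [ae_restrict_mem measurableSet_ball] with y hy
    rw [mem_ball, dist_comm] at hy
    have h1 : 0 ≤ dist x y / r ^ n := div_nonneg dist_nonneg (hrn n).le
    have h2 : dist x y / r ^ n < 1 := (div_lt_one (hrn n)).mpr hy
    rw [Real.norm_eq_abs, abs_le]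
    constructor <;> linarith
  have hI0 : ∀ n : ℕ, 0 ≤ I n := by
    intro n
    refine setIntegral_nonneg measurableSet_ball fun y hy => ?_
    rw [mem_ball, dist_comm] at hy
    have : dist x y / r ^ n < 1 := (div_lt_one (hrn n)).mpr hy
    linarith
  -- the key recursive inequality
  have hstep : ∀ n ≥ N₀,
      (1 - r) * (m (ball x (r ^ (n+1)))).toReal + r * I (n+1) ≤ I n := by
    intro n hn
    have hn1 : N₀ ≤ n + 1 := le_trans hn (Nat.le_succ n)
    have hsub : ball x (r ^ (n+1)) ⊆ ball x (r ^ n) :=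
      ball_subset_ball (pow_le_pow_of_le_one hr0.le hr1.le (Nat.le_succ n))
    have h1 : ∫ y in ball x (r ^ (n+1)), (1 - dist x y / r ^ n) ∂m ≤ I n := by
      refine setIntegral_mono_set (hint n hn) ?_ (HasSubset.Subset.eventuallyLE hsub)
      filter_upwards [ae_restrict_mem measurableSet_ball] with y hy
      rw [mem_ball, dist_comm] at hy
      have : dist x y / r ^ n < 1 := (div_lt_one (hrn n)).mpr hy
      simp only [Pi.zero_apply]
      linarith
    have heq : ∫ y in ball x (r ^ (n+1)), (1 - dist x y / r ^ n) ∂m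
        = (1 - r) * (m (ball x (r ^ (n+1)))).toReal + r * I (n+1) := by
      have hfun : ∀ y : X, (1 - dist x y / r ^ n)
          = (1 - r) + r * (1 - dist x y / r ^ (n+1)) := by
        intro y
        have hne : (r:ℝ) ^ n ≠ 0 := (hrn n).ne'
        have hne1 : (r:ℝ) ^ (n+1) ≠ 0 := (hrn (n+1)).ne'
        field_simp
        ring
      simp_rw [hfun]
      rw [integral_add (integrableOn_const (C := (1 - r : ℝ)) (hfin (n+1) hn1).ne)
        ((hint (n+1) hn1).const_mul r), integral_const_mul, setIntegral_const,
        smul_eq_mul, mul_comm]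
      rfl
    linarith [heq ▸ h1]
  set c : ℕ → ℝ := fun n => D / 2 * ((1 - r) / r) * (r ^ n) ^ β with hcdef
  set ξ : ℝ := r ^ (β + 1) with hxdef
  have hξ : ξ = (r:ℝ) ^ β * r := by
    rw [hxdef, Real.rpow_add hr0, Real.rpow_one]
  have hcx : ∀ n : ℕ, c n * ξ = (1 - r) * (D / 2 * (r ^ (n+1)) ^ β) := by
    intro n
    have hpow : ((r:ℝ) ^ (n+1)) ^ β = (r ^ n) ^ β * r ^ β := by
      rw [pow_succ, Real.mul_rpow (pow_nonneg hr0.le n) hr0.le]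
    simp only [hcdef, hξ, hpow]
    field_simp
  have hcx' : ∀ n : ℕ, c n * ξ = r * c (n+1) := by
    intro n
    have hpow : ((r:ℝ) ^ (n+1)) ^ β = (r ^ n) ^ β * r ^ β := by
      rw [pow_succ, Real.mul_rpow (pow_nonneg hr0.le n) hr0.le]
    simp only [hcdef, hξ, hpow]
    field_simp
  have hc0 : ∀ n : ℕ, 0 ≤ c n := by
    intro n
    have := Real.rpow_pos_of_pos (hrn n) β
    have h1 : (0:ℝ) ≤ (1 - r) / r := div_nonneg (by linarith) hr0.le
    positivity
  -- partial sums lower bound by induction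
  have key : ∀ K : ℕ, ∀ n, N₀ ≤ n →
      c n * ∑ k ∈ Finset.range K, ξ ^ (k+1) ≤ I n := by
    intro K
    induction K with
    | zero => intro n hn; simpa using hI0 n
    | succ K ih =>
      intro n hn
      have hn1 : N₀ ≤ n + 1 := le_trans hn (Nat.le_succ n)
      have h1 := hstep n hn
      have h2 := hvol (n+1) hn1
      have h3 := ih (n+1) hn1
      have hsum : ∑ k ∈ Finset.range (K+1), ξ ^ (k+1)
          = (∑ k ∈ Finset.range K, ξ ^ (k+2)) + ξ ^ 1 := Finset.sum_range_succ' _ K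
      have hterm : (c n * ξ) * ∑ k ∈ Finset.range K, ξ ^ (k+1)
          = c n * ∑ k ∈ Finset.range K, ξ ^ (k+2) := by
        rw [Finset.mul_sum, Finset.mul_sum]
        exact Finset.sum_congr rfl fun k _ => by ring
      have hrecomb : c n * ∑ k ∈ Finset.range (K+1), ξ ^ (k+1)
          = (c n * ξ) + (c n * ξ) * ∑ k ∈ Finset.range K, ξ ^ (k+1) := by
        rw [hsum, hterm]
        ring
      rw [hrecomb, hcx' n]
      have h4 : r * c (n+1) * ∑ k ∈ Finset.range K, ξ ^ (k+1) ≤ r * I (n+1) := by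
        rw [mul_assoc]
        exact mul_le_mul_of_nonneg_left h3 hr0.le
      have h5 : r * c (n+1) ≤ (1 - r) * (m (ball x (r ^ (n+1)))).toReal := by
        rw [← hcx' n, hcx n]
        exact mul_le_mul_of_nonneg_left h2 (by linarith)
      linarith
  -- pass to the limit
  intro n hn
  have hξ0 : 0 < ξ := Real.rpow_pos_of_pos hr0 _
  have hξ1 : ξ < 1 := Real.rpow_lt_one hr0.le hr1 (by linarith)
  have hgeom : HasSum (fun k : ℕ => ξ ^ (k+1)) (ξ * (1 - ξ)⁻¹) := by
    have := (hasSum_geometric_of_lt_one hξ0.le hξ1).mul_left ξ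
    simpa [pow_succ, mul_comm] using this
  have htend : Tendsto (fun K => c n * ∑ k ∈ Finset.range K, ξ ^ (k+1)) atTop
      (𝓝 (c n * (ξ * (1 - ξ)⁻¹))) :=
    (hgeom.tendsto_sum_nat.const_mul _)
  have hlim : c n * (ξ * (1 - ξ)⁻¹) ≤ I n :=
    le_of_tendsto' htend fun K => key K n hn
  calc D / 2 * ((1 - r) / r) * (r ^ n) ^ β * (r ^ (β + 1) / (1 - r ^ (β + 1)))
      = c n * (ξ * (1 - ξ)⁻¹) := by simp only [hcdef, hxdef, div_eq_mul_inv]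
    _ ≤ I n := hlim
end

section
/- Let X be a metric space with a Borel measure m, x ∈ X, and N > 0 a real number. If the functions f_r(y) := m(B_r(y))/r^N are continuous in y for each r > 0, and {r_i} is a strictly decreasing sequence tending to 0 with r_i/r_{i+1} → 1, then for every y, liminf_{i→∞} m(B_{r_i}(y))/r_i^N = liminf_{r↓0} m(B_r(y))/r^N. -/
open MeasureTheory Metric Topology Filter

theorem liminf_seq_eq_liminf {X : Type*} [MetricSpace X] [MeasurableSpace X] [BorelSpace X]
    (m : Measure X) (N : ℝ) (hN : 0 < N)
    (hcont : ∀ r : ℝ, 0 < r → Continuous fun y : X => (m (ball y r)).toReal / r ^ N)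
    (r : ℕ → ℝ) (hrpos : ∀ i, 0 < r i) (hanti : StrictAnti r)
    (hr0 : Tendsto r atTop (𝓝 0))
    (hratio : Tendsto (fun i => r i / r (i + 1)) atTop (𝓝 1)) :
    ∀ y : X,
      liminf (fun i => (m (ball y (r i))).toReal / r i ^ N) atTop =
        liminf (fun s => (m (ball y s)).toReal / s ^ N) (𝓝[>] (0:ℝ)) := by
  intro y
  set u : ℝ → ℝ := fun s => (m (ball y s)).toReal / s ^ N with hu
  have hupos : ∀ s : ℝ, 0 ≤ u s := by
    intro s
    rcases le_or_gt s 0 with h | h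
    · simp [hu, Metric.ball_eq_empty.mpr h]
    · exact div_nonneg ENNReal.toReal_nonneg (Real.rpow_pos_of_pos h N).le
  -- the key quantitative lemma
  have key : ∀ a : ℝ, 0 < a → (∀ᶠ i in atTop, a ≤ u (r i)) →
      ∀ c : ℝ, 0 < c → c < a → ∀ᶠ s in 𝓝[>] (0:ℝ), c ≤ u s := by
    intro a ha hS c hc hca
    have hrat : Tendsto (fun i => (r (i + 1) / r i) ^ N) atTop (𝓝 1) := by
      have h1 : Tendsto (fun i => r (i + 1) / r i) atTop (𝓝 1) := by
        have := hratio.inv₀ one_ne_zero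
        simpa [inv_div] using this
      simpa using h1.rpow_const (Or.inl one_ne_zero)
    have hev : ∀ᶠ i in atTop, c / a < (r (i + 1) / r i) ^ N :=
      hrat.eventually (eventually_gt_nhds (by rw [div_lt_one ha]; exact hca))
    obtain ⟨i₀, hi₀⟩ := eventually_atTop.mp (hS.and hev)
    have hIoo : Set.Ioo (0:ℝ) (r i₀) ∈ 𝓝[>] (0:ℝ) :=
      Ioo_mem_nhdsGT_of_mem ⟨le_rfl, hrpos i₀⟩
    filter_upwards [hIoo] with s hs
    obtain ⟨hs0, hsr⟩ := hs
    have hex : ∃ k, r k < s := (hr0.eventually (eventually_lt_nhds hs0)).exists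
    set k := Nat.find hex with hkdef
    have hk : r k < s := Nat.find_spec hex
    have hmin : ∀ j < k, s ≤ r j := fun j hj => not_lt.mp (Nat.find_min hex hj)
    have hk0 : i₀ < k := by
      by_contra h
      push_neg at h
      have : r i₀ ≤ r k := hanti.antitone h
      linarith
    set j := k - 1 with hjdef
    have hj1 : j + 1 = k := by omega
    have hji₀ : i₀ ≤ j := Nat.le_sub_one_of_lt hk0
    have hsj : s ≤ r j := hmin j (by omega)
    have hk' : r (j + 1) < s := by rw [hj1]; exact hk
    have haj : a ≤ u (r j) := (hi₀ j hji₀).1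
    have haj1 : a ≤ u (r (j + 1)) := (hi₀ (j + 1) (le_trans hji₀ (Nat.le_succ j))).1
    have hratj : c / a < (r (j + 1) / r j) ^ N := (hi₀ j hji₀).2
    -- finiteness
    have hfinj : m (ball y (r j)) ≠ ⊤ := by
      intro h
      have : u (r j) = 0 := by simp [hu, h]
      linarith
    have hfin : m (ball y s) ≠ ⊤ := by
      intro h
      exact hfinj (top_le_iff.mp (h ▸ measure_mono (ball_subset_ball hsj)))
    have hsN : 0 < s ^ N := Real.rpow_pos_of_pos hs0 N
    have hrjN : 0 < (r j) ^ N := Real.rpow_pos_of_pos (hrpos j) N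
    have hrj1N : 0 < (r (j + 1)) ^ N := Real.rpow_pos_of_pos (hrpos (j + 1)) N
    have h1 : (m (ball y (r (j + 1)))).toReal ≤ (m (ball y s)).toReal :=
      ENNReal.toReal_mono hfin (measure_mono (ball_subset_ball hk'.le))
    have hpowle : s ^ N ≤ (r j) ^ N := Real.rpow_le_rpow hs0.le hsj hN.le
    have h2 : (m (ball y (r (j + 1)))).toReal / (r j) ^ N
        ≤ (m (ball y (r (j + 1)))).toReal / s ^ N := by
      gcongr
    have heq : u (r (j + 1)) * (r (j + 1) / r j) ^ N
        = (m (ball y (r (j + 1)))).toReal / (r j) ^ N := by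
      rw [hu]
      rw [Real.div_rpow (hrpos (j + 1)).le (hrpos j).le]
      field_simp
    have h3 : a * (c / a) ≤ u (r (j + 1)) * (r (j + 1) / r j) ^ N :=
      mul_le_mul haj1 hratj.le (div_nonneg hc.le ha.le) (hupos _)
    have hac : a * (c / a) = c := by field_simp
    have h4 : (m (ball y (r (j + 1)))).toReal / s ^ N ≤ u s := by
      show _ ≤ (m (ball y s)).toReal / s ^ N
      exact (div_le_div_iff_of_pos_right hsN).mpr h1
    calc c = a * (c / a) := hac.symm
      _ ≤ u (r (j + 1)) * (r (j + 1) / r j) ^ N := h3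
      _ = (m (ball y (r (j + 1)))).toReal / (r j) ^ N := heq
      _ ≤ (m (ball y (r (j + 1)))).toReal / s ^ N := h2
      _ ≤ u s := h4
  have hmap : Tendsto r atTop (𝓝[>] (0:ℝ)) :=
    tendsto_nhdsWithin_iff.mpr ⟨hr0, Eventually.of_forall fun i => hrpos i⟩
  have hsub : {a : ℝ | ∀ᶠ s in 𝓝[>] (0:ℝ), a ≤ u s} ⊆ {a : ℝ | ∀ᶠ i in atTop, a ≤ u (r i)} :=
    fun a ha => hmap.eventually ha
  have h02 : (0:ℝ) ∈ {a : ℝ | ∀ᶠ s in 𝓝[>] (0:ℝ), a ≤ u s} := by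
    simp only [Set.mem_setOf_eq]
    exact Eventually.of_forall fun s => hupos s
  have h01 : (0:ℝ) ∈ {a : ℝ | ∀ᶠ i in atTop, a ≤ u (r i)} := hsub h02
  show liminf (fun i => u (r i)) atTop = liminf u (𝓝[>] (0:ℝ))
  rw [Filter.liminf_eq, Filter.liminf_eq]
  by_cases hbdd : BddAbove {a : ℝ | ∀ᶠ i in atTop, a ≤ u (r i)}
  · have hbdd2 : BddAbove {a : ℝ | ∀ᶠ s in 𝓝[>] (0:ℝ), a ≤ u s} := hbdd.mono hsub
    apply le_antisymm
    · apply csSup_le ⟨0, h01⟩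
      intro a ha
      rcases le_or_gt a 0 with h | h
      · exact h.trans (le_csSup hbdd2 h02)
      · by_contra hcon
        push_neg at hcon
        have h0le : 0 ≤ sSup {a : ℝ | ∀ᶠ s in 𝓝[>] (0:ℝ), a ≤ u s} := le_csSup hbdd2 h02
        set c := (sSup {a : ℝ | ∀ᶠ s in 𝓝[>] (0:ℝ), a ≤ u s} + a) / 2 with hcdef
        have hc : 0 < c := by rw [hcdef]; linarith
        have hca : c < a := by rw [hcdef]; linarith
        have hcS : c ∈ {a : ℝ | ∀ᶠ s in 𝓝[>] (0:ℝ), a ≤ u s} := key a h ha c hc hca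
        have := le_csSup hbdd2 hcS
        rw [hcdef] at this
        linarith
    · exact csSup_le_csSup hbdd ⟨0, h02⟩ hsub
  · have hbdd2 : ¬ BddAbove {a : ℝ | ∀ᶠ s in 𝓝[>] (0:ℝ), a ≤ u s} := by
      intro ⟨b, hb⟩
      apply hbdd
      refine ⟨max 1 (2 * b), ?_⟩
      intro a ha
      rcases le_or_gt a 1 with h | h
      · exact h.trans (le_max_left _ _)
      · have ha2 : a / 2 ∈ {a : ℝ | ∀ᶠ s in 𝓝[>] (0:ℝ), a ≤ u s} :=
          key a (by linarith) ha (a / 2) (by linarith) (by linarith)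
        have := hb ha2
        calc a = 2 * (a / 2) := by ring
          _ ≤ 2 * b := by linarith
          _ ≤ max 1 (2 * b) := le_max_right _ _
    rw [Real.sSup_of_not_bddAbove hbdd, Real.sSup_of_not_bddAbove hbdd2]
end

section
/- Let X be a metric space with Borel measure m, x ∈ X, N > 0, α < N real numbers. Suppose limsup_{r→0} m(B_r(x))/r^α =: A < ∞, and suppose there exist a sequence r_i ↓ 0 and a constant C₀ > 0 such that for every ε > 0, limsup_{i→∞} m(B_{ε r_i}(x)) / (∫_{B_{r_i}(x)}(1 - d(x,·)/r_i) dm) ≤ C₀ ε^N. Then liminf_{r→0} m(B_r(x))/r^α = 0. -/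
open MeasureTheory Metric Topology Filter ENNReal

theorem liminf_zero_of_weakly_regular {X : Type*} [MetricSpace X] [MeasurableSpace X]
    [BorelSpace X] (m : Measure X) (x : X) (N α : ℝ) (hN : 0 < N) (hα : α < N)
    (hA : limsup (fun ρ => m (ball x ρ) / ENNReal.ofReal (ρ ^ α)) (𝓝[>] (0:ℝ)) < ⊤)
    (r : ℕ → ℝ) (hrpos : ∀ i, 0 < r i) (hanti : StrictAnti r)
    (hr0 : Tendsto r atTop (𝓝 0))
    (C₀ : ℝ) (hC₀ : 0 < C₀)
    (hup : ∀ ε : ℝ, 0 < ε →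
      limsup (fun i => m (ball x (ε * r i)) /
          ENNReal.ofReal (∫ y in ball x (r i), (1 - dist x y / r i) ∂m)) atTop
        ≤ ENNReal.ofReal (C₀ * ε ^ N)) :
    liminf (fun ρ => m (ball x ρ) / ENNReal.ofReal (ρ ^ α)) (𝓝[>] (0:ℝ)) = 0 := by
  set f : ℝ → ℝ≥0∞ := fun ρ => m (ball x ρ) / ENNReal.ofReal (ρ ^ α) with hfdef
  by_contra hL0
  set L := liminf f (𝓝[>] (0:ℝ)) with hLdef
  have hLA : L ≤ limsup f (𝓝[>] (0:ℝ)) := liminf_le_limsup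
  have hLtop : L ≠ ⊤ := (hLA.trans_lt hA).ne
  set l := L.toReal with hl
  have hlpos : 0 < l := ENNReal.toReal_pos hL0 hLtop
  set A1 := limsup f (𝓝[>] (0:ℝ)) + 1 with hA1
  have hA1top : A1 ≠ ⊤ := by
    simp only [hA1]
    exact ENNReal.add_ne_top.mpr ⟨hA.ne, ENNReal.one_ne_top⟩
  have hA1ne0 : A1 ≠ 0 := by
    simp [hA1]
  have hAltA1 : limsup f (𝓝[>] (0:ℝ)) < A1 := ENNReal.lt_add_right hA.ne one_ne_zero
  set a := A1.toReal with ha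
  have hapos : 0 < a := ENNReal.toReal_pos hA1ne0 hA1top
  have hofa : ENNReal.ofReal a = A1 := ENNReal.ofReal_toReal hA1top
  -- eventual bounds near 0
  have hev1 : ∀ᶠ ρ in 𝓝[>] (0:ℝ), ENNReal.ofReal (l/2) < f ρ := by
    have hlt : ENNReal.ofReal (l/2) < liminf f (𝓝[>] (0:ℝ)) := by
      rw [← hLdef]
      calc ENNReal.ofReal (l/2) < ENNReal.ofReal l :=
            (ENNReal.ofReal_lt_ofReal_iff hlpos).mpr (half_lt_self hlpos)
        _ = L := ENNReal.ofReal_toReal hLtop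
    exact Filter.eventually_lt_of_lt_liminf hlt
  have hev2 : ∀ᶠ ρ in 𝓝[>] (0:ℝ), f ρ < A1 := Filter.eventually_lt_of_limsup_lt hAltA1
  obtain ⟨δ, hδpos, hδ⟩ : ∃ δ > 0, ∀ ρ : ℝ, 0 < ρ → ρ < δ →
      ENNReal.ofReal (l/2) < f ρ ∧ f ρ < A1 := by
    have h := hev1.and hev2
    rw [eventually_nhdsWithin_iff, Metric.eventually_nhds_iff] at h
    obtain ⟨δ, hδpos, hδ⟩ := h
    refine ⟨δ, hδpos, fun ρ hρ hρδ => hδ ?_ hρ⟩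
    rw [Real.dist_eq, sub_zero, abs_of_pos hρ]
    exact hρδ
  -- choose ε
  obtain ⟨ε, hεmem, hεkey⟩ : ∃ ε : ℝ, ε ∈ Set.Ioi (0:ℝ) ∧ C₀ * ε ^ (N - α) * a < l / 2 := by
    have h1 : ContinuousAt (fun t : ℝ => t ^ (N - α)) 0 :=
      Real.continuousAt_rpow_const 0 (N - α) (Or.inr (by linarith))
    have h2 : Tendsto (fun t : ℝ => C₀ * t ^ (N - α) * a) (𝓝[>] 0) (𝓝 (C₀ * (0:ℝ) ^ (N - α) * a)) :=
      (((h1.tendsto).mono_left nhdsWithin_le_nhds).const_mul _).mul_const _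
    rw [Real.zero_rpow (by linarith : N - α ≠ 0)] at h2
    have h3 : Tendsto (fun t : ℝ => C₀ * t ^ (N - α) * a) (𝓝[>] 0) (𝓝 0) := by simpa using h2
    have h4 : ∀ᶠ t in 𝓝[>] (0:ℝ), C₀ * t ^ (N - α) * a < l / 2 :=
      h3.eventually_lt_const (by positivity)
    exact (eventually_mem_nhdsWithin.and h4).exists
  have hεpos : 0 < ε := hεmem
  -- the main eventual lower bound
  have hi : ∀ᶠ i in atTop, ENNReal.ofReal (l/2 * ε ^ α) / A1 ≤
      m (ball x (ε * r i)) /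
        ENNReal.ofReal (∫ y in ball x (r i), (1 - dist x y / r i) ∂m) := by
    have h1 : ∀ᶠ i in atTop, r i < δ := hr0.eventually_lt_const hδpos
    have h2 : ∀ᶠ i in atTop, ε * r i < δ := by
      have : Tendsto (fun i => ε * r i) atTop (𝓝 (ε * 0)) := hr0.const_mul ε
      rw [mul_zero] at this
      exact this.eventually_lt_const hδpos
    filter_upwards [h1, h2] with i hi1 hi2
    have hri : 0 < r i := hrpos i
    have hεri : 0 < ε * r i := by positivity
    have hεα : (0:ℝ) < (ε * r i) ^ α := Real.rpow_pos_of_pos hεri α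
    have hrα : (0:ℝ) < (r i) ^ α := Real.rpow_pos_of_pos hri α
    obtain ⟨hlow, -⟩ := hδ (ε * r i) hεri hi2
    obtain ⟨-, hupp⟩ := hδ (r i) hri hi1
    -- numerator lower bound
    have hnum : ENNReal.ofReal (l/2) * ENNReal.ofReal ((ε * r i) ^ α) ≤ m (ball x (ε * r i)) := by
      have := (ENNReal.lt_div_iff_mul_lt (Or.inl (by simp [hεα]))
        (Or.inl ENNReal.ofReal_ne_top)).mp hlow
      exact this.le
    -- denominator upper bounds
    have hden : m (ball x (r i)) < A1 * ENNReal.ofReal ((r i) ^ α) := by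
      exact (ENNReal.div_lt_iff (Or.inl (by simp [hrα])) (Or.inl ENNReal.ofReal_ne_top)).mp hupp
    have hmfin : m (ball x (r i)) < ∞ :=
      hden.trans_le le_top |>.trans_le (le_refl _) |>.trans_le le_top
    have hz : ENNReal.ofReal (∫ y in ball x (r i), (1 - dist x y / r i) ∂m)
        ≤ m (ball x (r i)) := by
      have hint : ∫ y in ball x (r i), (1 - dist x y / r i) ∂m ≤ (m (ball x (r i))).toReal := by
        have hn : ‖∫ y in ball x (r i), (1 - dist x y / r i) ∂m‖ ≤ 1 * (m (ball x (r i))).toReal := by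
          apply norm_setIntegral_le_of_norm_le_const_ae' hmfin
          filter_upwards with y hy
          rw [Real.norm_eq_abs, abs_le]
          constructor
          · have : dist x y / r i < 1 := by
              rw [div_lt_one hri]
              rw [mem_ball, dist_comm] at hy
              exact hy
            linarith
          · have : 0 ≤ dist x y / r i := by positivity
            linarith
        calc ∫ y in ball x (r i), (1 - dist x y / r i) ∂m
            ≤ ‖∫ y in ball x (r i), (1 - dist x y / r i) ∂m‖ := le_abs_self _
          _ ≤ 1 * (m (ball x (r i))).toReal := hn
          _ = (m (ball x (r i))).toReal := one_mul _
      calc ENNReal.ofReal (∫ y in ball x (r i), (1 - dist x y / r i) ∂m)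
          ≤ ENNReal.ofReal ((m (ball x (r i))).toReal) := ENNReal.ofReal_le_ofReal hint
        _ = m (ball x (r i)) := ENNReal.ofReal_toReal hmfin.ne
    -- put it together
    have key : ENNReal.ofReal (l/2) * ENNReal.ofReal ((ε * r i) ^ α) /
        (A1 * ENNReal.ofReal ((r i) ^ α)) ≤
        m (ball x (ε * r i)) /
          ENNReal.ofReal (∫ y in ball x (r i), (1 - dist x y / r i) ∂m) :=
      ENNReal.div_le_div hnum (hz.trans hden.le)
    refine le_trans (le_of_eq ?_) key
    have hmulrpow : (ε * r i) ^ α = ε ^ α * (r i) ^ α := Real.mul_rpow hεpos.le hri.le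
    rw [hmulrpow, ENNReal.ofReal_mul (by positivity : (0:ℝ) ≤ ε ^ α), ← mul_assoc,
      ← ENNReal.ofReal_mul (by positivity : (0:ℝ) ≤ l/2)]
    rw [ENNReal.mul_div_mul_right _ _ (by simp [hrα]) ENNReal.ofReal_ne_top]
  -- conclude from the hypothesis
  have hlim : ENNReal.ofReal (l/2 * ε ^ α) / A1 ≤ ENNReal.ofReal (C₀ * ε ^ N) := by
    refine le_trans ?_ (hup ε hεpos)
    exact Filter.le_limsup_of_frequently_le hi.frequently
  have hreal : l/2 * ε ^ α ≤ C₀ * ε ^ N * a := by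
    rw [ENNReal.div_le_iff_le_mul (Or.inl hA1ne0) (Or.inl hA1top)] at hlim
    rw [← hofa, ← ENNReal.ofReal_mul (by positivity : (0:ℝ) ≤ C₀ * ε ^ N)] at hlim
    exact (ENNReal.ofReal_le_ofReal_iff (by positivity)).mp hlim
  have hεα' : (0:ℝ) < ε ^ α := Real.rpow_pos_of_pos hεpos α
  have hsplit : ε ^ N = ε ^ (N - α) * ε ^ α := by
    rw [← Real.rpow_add hεpos]; ring_nf
  rw [hsplit] at hreal
  nlinarith [hreal, hεkey, hεα']
end

section
/- Let X be a metric space with Borel measure m, x ∈ X, N > 0, β > N. Suppose liminf_{r→0} m(B_r(x))/r^β =: D ∈ (0,∞), and suppose there is a constant C₁ > 0 such that for every r ∈ (0,1), every ε > 0, and the sequence r_n := r^n, one has lim_{n→∞} m(B_{ε r_n}(x)) / (∫_{B_{r_n}(x)}(1 - d(x,·)/r_n) dm) = C₁ ε^N. Then limsup_{r→0} m(B_r(x))/r^β = ∞. -/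
open MeasureTheory Metric Topology Filter ENNReal

theorem limsup_infinite_of_regular {X : Type*} [MetricSpace X] [MeasurableSpace X]
    [BorelSpace X] (m : Measure X) (x : X) (N β : ℝ) (hN : 0 < N) (hβ : N < β)
    (D : ℝ) (hD : 0 < D)
    (hliminf : liminf (fun ρ => m (ball x ρ) / ENNReal.ofReal (ρ ^ β)) (𝓝[>] (0:ℝ))
      = ENNReal.ofReal D)
    (C₁ : ℝ) (hC₁ : 0 < C₁)
    (hreg : ∀ r ∈ Set.Ioo (0:ℝ) 1, ∀ ε : ℝ, 0 < ε →
      Tendsto (fun n => m (ball x (ε * r ^ n)) /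
          ENNReal.ofReal (∫ y in ball x (r ^ n), (1 - dist x y / r ^ n) ∂m)) atTop
        (𝓝 (ENNReal.ofReal (C₁ * ε ^ N)))) :
    limsup (fun ρ => m (ball x ρ) / ENNReal.ofReal (ρ ^ β)) (𝓝[>] (0:ℝ)) = ⊤ := by
  by_contra hne
  set f : ℝ → ℝ≥0∞ := fun ρ => m (ball x ρ) / ENNReal.ofReal (ρ ^ β) with hfdef
  set c : ℝ≥0∞ := limsup f (𝓝[>] (0:ℝ)) + 1 with hcdef
  have hc_top : c ≠ ⊤ := by
    simp only [hcdef, Ne, ENNReal.add_eq_top, ENNReal.one_ne_top, or_false]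
    exact hne
  have hDpos : (0:ℝ) < D / 2 := half_pos hD
  have hd0 : ENNReal.ofReal (D / 2) ≠ 0 := (ENNReal.ofReal_pos.2 hDpos).ne'
  have hub : ∀ᶠ ρ in 𝓝[>] (0:ℝ), f ρ < c :=
    eventually_lt_of_limsup_lt (ENNReal.lt_add_right hne one_ne_zero)
  have hlb : ∀ᶠ ρ in 𝓝[>] (0:ℝ), ENNReal.ofReal (D / 2) < f ρ := by
    refine eventually_lt_of_lt_liminf ?_ (by isBoundedDefault)
    rw [hliminf]
    exact (ENNReal.ofReal_lt_ofReal_iff hD).2 (half_lt_self hD)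
  have hpos : ∀ᶠ ρ in 𝓝[>] (0:ℝ), (0:ℝ) < ρ := self_mem_nhdsWithin
  -- upper bound on measures
  have hub' : ∀ᶠ ρ in 𝓝[>] (0:ℝ), m (ball x ρ) ≤ c * ENNReal.ofReal (ρ ^ β) := by
    filter_upwards [hub, hpos] with ρ h hρ
    have hb0 : ENNReal.ofReal (ρ ^ β) ≠ 0 := (ENNReal.ofReal_pos.2 (Real.rpow_pos_of_pos hρ β)).ne'
    exact ((ENNReal.div_lt_iff (Or.inl hb0) (Or.inl ENNReal.ofReal_ne_top)).1 h).le
  have hlb' : ∀ᶠ ρ in 𝓝[>] (0:ℝ),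
      ENNReal.ofReal (ρ ^ β) ≤ m (ball x ρ) / ENNReal.ofReal (D / 2) := by
    filter_upwards [hlb, hpos] with ρ h hρ
    rw [ENNReal.le_div_iff_mul_le (Or.inl hd0) (Or.inl ENNReal.ofReal_ne_top), mul_comm]
    exact (ENNReal.mul_lt_of_lt_div h).le
  -- the key inequality for every ε ∈ (0,1)
  have key : ∀ ε ∈ Set.Ioo (0:ℝ) 1,
      ENNReal.ofReal (C₁ * ε ^ N) ≤ (c * ENNReal.ofReal (ε ^ β) * (ENNReal.ofReal (D / 2))⁻¹)
        * ENNReal.ofReal C₁ := by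
    intro ε hε
    obtain ⟨hε0, hε1⟩ := hε
    have hr : (1/2 : ℝ) ∈ Set.Ioo (0:ℝ) 1 := by norm_num
    have hrn : Tendsto (fun n : ℕ => (1/2 : ℝ) ^ n) atTop (𝓝[>] (0:ℝ)) := by
      rw [tendsto_nhdsWithin_iff]
      constructor
      · exact tendsto_pow_atTop_nhds_zero_of_lt_one (by norm_num) (by norm_num)
      · exact Eventually.of_forall fun n => pow_pos (by norm_num : (0:ℝ) < 1/2) n
    have hεrn : Tendsto (fun n : ℕ => ε * (1/2 : ℝ) ^ n) atTop (𝓝[>] (0:ℝ)) := by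
      rw [tendsto_nhdsWithin_iff]
      constructor
      · simpa using (tendsto_pow_atTop_nhds_zero_of_lt_one (by norm_num)
          (by norm_num : (1/2:ℝ) < 1)).const_mul ε
      · exact Eventually.of_forall fun n => mul_pos hε0 (pow_pos (by norm_num) n)
    have hA : Tendsto (fun n : ℕ => m (ball x (ε * (1/2:ℝ) ^ n)) /
        ENNReal.ofReal (∫ y in ball x ((1/2:ℝ) ^ n), (1 - dist x y / (1/2:ℝ) ^ n) ∂m)) atTop
        (𝓝 (ENNReal.ofReal (C₁ * ε ^ N))) := hreg _ hr ε hε0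
    have hB : Tendsto (fun n : ℕ => m (ball x ((1/2:ℝ) ^ n)) /
        ENNReal.ofReal (∫ y in ball x ((1/2:ℝ) ^ n), (1 - dist x y / (1/2:ℝ) ^ n) ∂m)) atTop
        (𝓝 (ENNReal.ofReal C₁)) := by
      have h := hreg _ hr 1 one_pos
      simp only [one_mul, Real.one_rpow, mul_one] at h
      exact h
    set K : ℝ≥0∞ := c * ENNReal.ofReal (ε ^ β) * (ENNReal.ofReal (D / 2))⁻¹ with hK
    have hKt : K ≠ ⊤ :=
      ENNReal.mul_ne_top (ENNReal.mul_ne_top hc_top ENNReal.ofReal_ne_top)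
        (ENNReal.inv_ne_top.2 hd0)
    have hle : ∀ᶠ n in atTop, m (ball x (ε * (1/2:ℝ) ^ n)) /
        ENNReal.ofReal (∫ y in ball x ((1/2:ℝ) ^ n), (1 - dist x y / (1/2:ℝ) ^ n) ∂m)
        ≤ K * (m (ball x ((1/2:ℝ) ^ n)) /
        ENNReal.ofReal (∫ y in ball x ((1/2:ℝ) ^ n), (1 - dist x y / (1/2:ℝ) ^ n) ∂m)) := by
      filter_upwards [hrn.eventually hlb', hεrn.eventually hub'] with n h1 h2
      have hm : m (ball x (ε * (1/2:ℝ) ^ n)) ≤ K * m (ball x ((1/2:ℝ) ^ n)) := by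
        calc m (ball x (ε * (1/2:ℝ) ^ n)) ≤ c * ENNReal.ofReal ((ε * (1/2:ℝ) ^ n) ^ β) := h2
        _ = c * (ENNReal.ofReal (ε ^ β) * ENNReal.ofReal (((1/2:ℝ) ^ n) ^ β)) := by
            rw [Real.mul_rpow hε0.le (by positivity), ENNReal.ofReal_mul (by positivity)]
        _ ≤ c * (ENNReal.ofReal (ε ^ β) *
              (m (ball x ((1/2:ℝ) ^ n)) * (ENNReal.ofReal (D / 2))⁻¹)) := by
            rw [← div_eq_mul_inv]; gcongr
        _ = K * m (ball x ((1/2:ℝ) ^ n)) := by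
            rw [hK]; ring
      calc m (ball x (ε * (1/2:ℝ) ^ n)) /
          ENNReal.ofReal (∫ y in ball x ((1/2:ℝ) ^ n), (1 - dist x y / (1/2:ℝ) ^ n) ∂m)
          ≤ K * m (ball x ((1/2:ℝ) ^ n)) /
          ENNReal.ofReal (∫ y in ball x ((1/2:ℝ) ^ n), (1 - dist x y / (1/2:ℝ) ^ n) ∂m) :=
        ENNReal.div_le_div_right hm _
      _ = _ := by rw [mul_div_assoc]
    have hKB := ENNReal.Tendsto.const_mul hB (Or.inr hKt)
    exact le_of_tendsto_of_tendsto hA hKB hle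
  -- translate to reals
  have key' : ∀ ε ∈ Set.Ioo (0:ℝ) 1,
      C₁ * ε ^ N ≤ c.toReal * ε ^ β * (D / 2)⁻¹ * C₁ := by
    intro ε hε
    obtain ⟨hε0, hε1⟩ := hε
    have h := key ε ⟨hε0, hε1⟩
    have hRt : (c * ENNReal.ofReal (ε ^ β) * (ENNReal.ofReal (D / 2))⁻¹) * ENNReal.ofReal C₁
        ≠ ⊤ :=
      ENNReal.mul_ne_top (ENNReal.mul_ne_top (ENNReal.mul_ne_top hc_top ENNReal.ofReal_ne_top)
        (ENNReal.inv_ne_top.2 hd0)) ENNReal.ofReal_ne_top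
    have h2 := (ENNReal.ofReal_le_iff_le_toReal hRt).1 h
    refine h2.trans (le_of_eq ?_)
    rw [ENNReal.toReal_mul, ENNReal.toReal_mul, ENNReal.toReal_mul, ENNReal.toReal_inv,
      ENNReal.toReal_ofReal (by positivity : (0:ℝ) ≤ ε ^ β),
      ENNReal.toReal_ofReal hDpos.le, ENNReal.toReal_ofReal hC₁.le]
  -- derive 1 ≤ M * ε^(β - N) for ε ∈ (0,1)
  set M : ℝ := c.toReal * (D / 2)⁻¹ with hM
  have key'' : ∀ ε ∈ Set.Ioo (0:ℝ) 1, (1:ℝ) ≤ M * ε ^ (β - N) := by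
    intro ε hε
    obtain ⟨hε0, hε1⟩ := hε
    have h := key' ε ⟨hε0, hε1⟩
    have hεN : (0:ℝ) < ε ^ N := Real.rpow_pos_of_pos hε0 N
    have hβsplit : ε ^ β = ε ^ N * ε ^ (β - N) := by
      rw [← Real.rpow_add hε0]; ring_nf
    have h1 : ε ^ N ≤ c.toReal * ε ^ β * (D / 2)⁻¹ := by
      have h' : ε ^ N * C₁ ≤ c.toReal * ε ^ β * (D / 2)⁻¹ * C₁ := by linarith
      exact le_of_mul_le_mul_right h' hC₁
    have h2 : ε ^ N ≤ (M * ε ^ (β - N)) * ε ^ N := by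
      refine h1.trans (le_of_eq ?_)
      rw [hM, hβsplit]; ring
    have h3 : (1:ℝ) * ε ^ N ≤ (M * ε ^ (β - N)) * ε ^ N := by rwa [one_mul]
    exact le_of_mul_le_mul_right h3 hεN
  -- contradiction: M * ε^(β-N) → 0 as ε → 0⁺
  have htend : Tendsto (fun ε : ℝ => M * ε ^ (β - N)) (𝓝[>] (0:ℝ)) (𝓝 0) := by
    have hcont : ContinuousAt (fun ε : ℝ => ε ^ (β - N)) 0 :=
      Real.continuousAt_rpow_const 0 (β - N) (Or.inr (by linarith))
    have h0 : (0:ℝ) ^ (β - N) = 0 := Real.zero_rpow (by linarith : β - N ≠ 0)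
    have hbase : Tendsto (fun ε : ℝ => ε ^ (β - N)) (𝓝[>] (0:ℝ)) (𝓝 0) := by
      have := hcont.tendsto.mono_left (nhdsWithin_le_nhds (s := Set.Ioi (0:ℝ)))
      rwa [h0] at this
    simpa using hbase.const_mul M
  have hev : ∀ᶠ ε in 𝓝[>] (0:ℝ), (1:ℝ) ≤ M * ε ^ (β - N) := by
    filter_upwards [Ioo_mem_nhdsGT_of_mem (Set.left_mem_Ico.2 one_pos)] with ε hε
    exact key'' ε hε
  have : (1:ℝ) ≤ 0 := ge_of_tendsto htend hev
  linarith
end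

section
/- Let X be a metric measure space and x ∈ X a point with m(B_r(x)) > 0 for all r > 0. Suppose for some N > 0 both C₁ := lim_{r→0} m(B_r(x))/r^N exists in (0,∞) and along some sequence r_k ↓ 0 the constant C₂ := lim_{k→∞} r_k^N / ∫_{B_{r_k}(x)}(1 - d(x,·)/r_k) dm exists in (0,∞). If further for each s > 0 the rescaled normalized measures satisfy m^x_{r_k}(B^{d_{r_k}}_s(x)) → m_Y(B_s(y)) for a limit measure m_Y and point y, then m_Y(B_s(y)) = C₁ C₂ s^N for all s > 0; consequently m_Y(B_{s_2}(y))/m_Y(B_{s_1}(y)) = (s_2/s_1)^N for all s_1, s_2 > 0. -/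
open MeasureTheory Metric Topology Filter

theorem tangent_measure_cone {X : Type*} [MetricSpace X] [MeasurableSpace X] [BorelSpace X]
    (m : Measure X) (x : X) (N : ℝ) (hN : 0 < N)
    (hpos : ∀ ρ : ℝ, 0 < ρ → 0 < m (ball x ρ))
    (C₁ : ℝ) (hC₁ : 0 < C₁)
    (h1 : Tendsto (fun ρ => (m (ball x ρ)).toReal / ρ ^ N) (𝓝[>] (0:ℝ)) (𝓝 C₁))
    (r : ℕ → ℝ) (hrpos : ∀ k, 0 < r k) (hanti : StrictAnti r)
    (hr0 : Tendsto r atTop (𝓝 0))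
    (C₂ : ℝ) (hC₂ : 0 < C₂)
    (h2 : Tendsto (fun k => r k ^ N / ∫ y in ball x (r k), (1 - dist x y / r k) ∂m)
      atTop (𝓝 C₂))
    (mY : ℝ → ℝ)
    (h3 : ∀ s : ℝ, 0 < s →
      Tendsto (fun k => (m (ball x (r k * s))).toReal /
          ∫ y in ball x (r k), (1 - dist x y / r k) ∂m) atTop (𝓝 (mY s))) :
    (∀ s : ℝ, 0 < s → mY s = C₁ * C₂ * s ^ N) ∧
      ∀ s₁ s₂ : ℝ, 0 < s₁ → 0 < s₂ → mY s₂ / mY s₁ = (s₂ / s₁) ^ N := by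
  have key : ∀ s : ℝ, 0 < s → mY s = C₁ * C₂ * s ^ N := by
    intro s hs
    -- r k * s tends to 0 within (0,∞)
    have hrs : Tendsto (fun k => r k * s) atTop (𝓝[>] (0:ℝ)) := by
      apply tendsto_nhdsWithin_of_tendsto_nhds_of_eventually_within
      · simpa using hr0.mul_const s
      · exact Eventually.of_forall fun k => mul_pos (hrpos k) hs
    have hA : Tendsto (fun k => (m (ball x (r k * s))).toReal / (r k * s) ^ N)
        atTop (𝓝 C₁) := h1.comp hrs
    have hprod : Tendsto (fun k =>
        ((m (ball x (r k * s))).toReal / (r k * s) ^ N) *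
          (s ^ N * (r k ^ N / ∫ y in ball x (r k), (1 - dist x y / r k) ∂m)))
        atTop (𝓝 (C₁ * (s ^ N * C₂))) :=
      hA.mul (tendsto_const_nhds.mul h2)
    have heq : (fun k =>
        ((m (ball x (r k * s))).toReal / (r k * s) ^ N) *
          (s ^ N * (r k ^ N / ∫ y in ball x (r k), (1 - dist x y / r k) ∂m))) =
        fun k => (m (ball x (r k * s))).toReal /
          ∫ y in ball x (r k), (1 - dist x y / r k) ∂m := by
      funext k
      have hr := hrpos k
      have h1' : (r k * s) ^ N = r k ^ N * s ^ N :=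
        Real.mul_rpow hr.le hs.le
      have hrN : (0:ℝ) < r k ^ N := Real.rpow_pos_of_pos hr N
      have hsN : (0:ℝ) < s ^ N := Real.rpow_pos_of_pos hs N
      set z := ∫ y in ball x (r k), (1 - dist x y / r k) ∂m with hz
      rw [h1']
      rcases eq_or_ne z 0 with h0 | h0
      · simp [h0]
      · field_simp
    rw [heq] at hprod
    have := tendsto_nhds_unique (h3 s hs) hprod
    rw [this]; ring
  refine ⟨key, fun s₁ s₂ hs₁ hs₂ => ?_⟩
  rw [key s₁ hs₁, key s₂ hs₂, Real.div_rpow hs₂.le hs₁.le]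
  rw [mul_div_mul_left _ _ (by positivity : C₁ * C₂ ≠ 0)]
end
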